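/- arXiv:0809.5282 — 6 statements merged into one kernel-verified Lean document; each statement's English description precedes it below -/
import Mathlib

section
/- Let B be a separable complex Banach space and let (T t)_{t≥0} be a C₀-semigroup on B. Suppose there exist an open connected set Ω ⊆ ℂ with Ω ∩ iℝ ≠ ∅ and a map F : Ω → B such that (i) for every λ ∈ Ω and every t ≥ 0 one has T t (F λ) = exp(t·λ) • F λ; (ii) for every continuous linear functional φ on B the map λ ↦ φ(F λ) is holomorphic on Ω; and (iii) if φ is a continuous linear functional with φ(F λ) = 0 for all λ ∈ Ω, then φ = 0. Then T is chaotic, i.e. some orbit {T t f : t ≥ 0} is dense in B and the set of periodic points {f ∈ B : ∃ t > 0, T t f = f} is dense in B. -/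
/-!
For `Re λ < 0`, `Re λ > 0` and `λ ∈ iℚ` the vector `F λ` is an eigenvector of `T 1`, `T 1` and
`T (2π)` respectively, with eigenvalue of modulus `< 1`, of modulus `> 1`, and a root of unity.
Each of these three parameter sets accumulates at the point `iy₀ ∈ Ω`, so by the identity theorem
no nonzero functional annihilates the corresponding eigenvectors, and by Hahn–Banach their spans
are dense. The first two spans make `T 1` topologically transitive (Kitai's criterion), hence
hypercyclic by Baire category (Birkhoff); the third consists of periodic points.
-/

open Filter Topology Set Function

theorem dense_span_of_forall_dual_eq_zero {𝕜 E : Type*} [RCLike 𝕜] [NormedAddCommGroup E]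
    [NormedSpace 𝕜 E] {s : Set E} (h : ∀ φ : E →L[𝕜] 𝕜, (∀ x ∈ s, φ x = 0) → φ = 0) :
    Dense (Submodule.span 𝕜 s : Set E) := by
  set M := (Submodule.span 𝕜 s).topologicalClosure
  have : IsClosed (M : Set E) := (Submodule.span 𝕜 s).isClosed_topologicalClosure
  rw [Submodule.dense_iff_topologicalClosure_eq_top, Submodule.eq_top_iff']
  by_contra! ⟨x, hx⟩
  obtain ⟨g, hg⟩ := SeparatingDual.exists_ne_zero (R := 𝕜) (x := M.mkQ x)
    (by rwa [Ne, Submodule.mkQ_apply, Submodule.Quotient.mk_eq_zero])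
  have hgM : g.comp M.mkQL = 0 := h _ fun y hy => by
    simp [(Submodule.Quotient.mk_eq_zero M).2
      (Submodule.le_topologicalClosure _ (Submodule.subset_span hy))]
  exact hg (by simpa using congr($hgM x))

theorem exists_dense_orbit_of_forall_exists_inter_preimage {X ι : Type*} [TopologicalSpace X]
    [BaireSpace X] [SecondCountableTopology X] [Nonempty X] {g : ι → X → X}
    (hg : ∀ i, Continuous (g i))
    (htrans : ∀ U V : Set X, IsOpen U → U.Nonempty → IsOpen V → V.Nonempty →
      ∃ i, (U ∩ g i ⁻¹' V).Nonempty) :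
    ∃ x, Dense (range fun i => g i x) := by
  set 𝒰 := {U ∈ TopologicalSpace.countableBasis X | U.Nonempty}
  have hopen : ∀ U ∈ 𝒰, IsOpen U := fun U hU =>
    TopologicalSpace.isOpen_of_mem_countableBasis hU.1
  have hvisit : Dense (⋂ U ∈ 𝒰, ⋃ i, g i ⁻¹' U) := by
    refine dense_biInter_of_isOpen
      (fun U hU => isOpen_iUnion fun i => (hopen U hU).preimage (hg i))
      ((TopologicalSpace.countable_countableBasis X).mono fun U hU => hU.1) fun U hU => ?_
    rw [dense_iff_inter_open]
    intro V hV hVne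
    obtain ⟨i, x, hxV, hxU⟩ := htrans V U hV hVne (hopen U hU) hU.2
    exact ⟨x, hxV, mem_iUnion.2 ⟨i, hxU⟩⟩
  obtain ⟨x, hx⟩ := hvisit.nonempty
  refine ⟨x, dense_iff_inter_open.2 fun V hV ⟨v, hv⟩ => ?_⟩
  obtain ⟨U, hUb, hvU, hUV⟩ :=
    (TopologicalSpace.isBasis_countableBasis X).exists_subset_of_mem_open hv hV
  obtain ⟨i, hi⟩ := mem_iUnion.1 (mem_iInter₂.1 hx U ⟨hUb, v, hvU⟩)
  exact ⟨g i x, hUV hi, i, rfl⟩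

namespace ContinuousLinearMap

variable {𝕜 E : Type*} [NontriviallyNormedField 𝕜] [NormedAddCommGroup E] [NormedSpace 𝕜 E]

def stableSubmodule (A : E →L[𝕜] E) : Submodule 𝕜 E where
  carrier := {x | Tendsto (fun n : ℕ => (A ^ n) x) atTop (𝓝 0)}
  add_mem' hx hy := by simpa only [mem_ofPred_eq, map_add, add_zero] using hx.add hy
  zero_mem' := by simpa only [mem_ofPred_eq, map_zero] using tendsto_const_nhds
  smul_mem' c _ hx := by simpa only [mem_ofPred_eq, map_smul, smul_zero] using hx.const_smul c

def unstableSubmodule (A : E →L[𝕜] E) : Submodule 𝕜 E where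
  carrier := {y | ∃ w : ℕ → E, Tendsto w atTop (𝓝 0) ∧ ∀ n, (A ^ n) (w n) = y}
  add_mem' := by
    rintro _ _ ⟨w, hw, hwx⟩ ⟨w', hw', hwy⟩
    exact ⟨fun n => w n + w' n, by simpa only [add_zero] using hw.add hw',
      fun n => by rw [map_add, hwx, hwy]⟩
  zero_mem' := ⟨0, tendsto_const_nhds, fun _ => map_zero _⟩
  smul_mem' := by
    rintro c _ ⟨w, hw, hwx⟩
    exact ⟨fun n => c • w n, by simpa only [smul_zero] using hw.const_smul c,
      fun n => by rw [map_smul, hwx]⟩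

def periodicSubmodule (A : E →L[𝕜] E) : Submodule 𝕜 E where
  carrier := periodicPts A
  add_mem' := by
    rintro x y ⟨m, hm, hx⟩ ⟨n, hn, hy⟩
    refine ⟨m * n, Nat.mul_pos hm hn, ?_⟩
    have hx' := hx.mul_const n
    have hy' := hy.const_mul m
    rw [IsPeriodicPt, IsFixedPt, ← FunLike.coe_pow_eq_iterate] at hx' hy' ⊢
    rw [map_add, hx', hy']
  zero_mem' := ⟨1, one_pos, map_zero A⟩
  smul_mem' := by
    rintro c x ⟨n, hn, hx⟩
    rw [IsPeriodicPt, IsFixedPt, ← FunLike.coe_pow_eq_iterate] at hx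
    refine ⟨n, hn, ?_⟩
    rw [IsPeriodicPt, IsFixedPt, ← FunLike.coe_pow_eq_iterate, map_smul, hx]

variable {A : E →L[𝕜] E} {c : 𝕜} {v : E}

theorem pow_apply_of_apply_eq_smul (hv : A v = c • v) (n : ℕ) : (A ^ n) v = c ^ n • v := by
  induction n with
  | zero => simp
  | succ n ih => rw [pow_succ, mul_apply_eq_comp, hv, map_smul, ih, smul_smul, ← pow_succ']

theorem mem_stableSubmodule_of_apply_eq_smul (hc : ‖c‖ < 1) (hv : A v = c • v) :
    v ∈ stableSubmodule A := by
  show Tendsto _ _ _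
  simpa only [pow_apply_of_apply_eq_smul hv, zero_smul] using
    (tendsto_pow_atTop_nhds_zero_of_norm_lt_one hc).smul_const v

theorem mem_unstableSubmodule_of_apply_eq_smul (hc : 1 < ‖c‖) (hv : A v = c • v) :
    v ∈ unstableSubmodule A := by
  have hc0 : c ≠ 0 := norm_pos_iff.1 (one_pos.trans hc)
  have hcinv : ‖c⁻¹‖ < 1 := by rwa [norm_inv, inv_lt_one₀ (one_pos.trans hc)]
  refine ⟨fun n => c⁻¹ ^ n • v, ?_, fun n => ?_⟩
  · simpa only [zero_smul] using (tendsto_pow_atTop_nhds_zero_of_norm_lt_one hcinv).smul_const v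
  · rw [map_smul, pow_apply_of_apply_eq_smul hv, smul_smul, ← mul_pow, inv_mul_cancel₀ hc0,
      one_pow, one_smul]

theorem mem_periodicSubmodule_of_apply_eq_smul {n : ℕ} (hn : 0 < n) (hc : c ^ n = 1)
    (hv : A v = c • v) : v ∈ periodicSubmodule A :=
  ⟨n, hn, by rw [IsPeriodicPt, IsFixedPt, ← FunLike.coe_pow_eq_iterate,
    pow_apply_of_apply_eq_smul hv, hc, one_smul]⟩

/-- Kitai's argument: `x + w n` is close to `x`, while `A ^ n (x + w n) = A ^ n x + y` is close
to `y`. -/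
theorem exists_inter_preimage_pow_of_dense (hs : Dense (stableSubmodule A : Set E))
    (hu : Dense (unstableSubmodule A : Set E)) {U V : Set E} (hU : IsOpen U) (hUne : U.Nonempty)
    (hV : IsOpen V) (hVne : V.Nonempty) : ∃ n : ℕ, (U ∩ (A ^ n) ⁻¹' V).Nonempty := by
  obtain ⟨x, hxU, hx⟩ := hs.inter_open_nonempty U hU hUne
  obtain ⟨y, hyV, w, hw, hwy⟩ := hu.inter_open_nonempty V hV hVne
  have hU' : ∀ᶠ n in atTop, x + w n ∈ U :=
    (by simpa only [add_zero] using tendsto_const_nhds.add hw :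
      Tendsto (fun n => x + w n) atTop (𝓝 x)).eventually (hU.mem_nhds hxU)
  have hV' : ∀ᶠ n in atTop, (A ^ n) x + y ∈ V :=
    (by simpa only [zero_add] using (hx : Tendsto _ _ _).add_const y :
      Tendsto (fun n => (A ^ n) x + y) atTop (𝓝 y)).eventually (hV.mem_nhds hyV)
  obtain ⟨n, hnU, hnV⟩ := (hU'.and hV').exists
  refine ⟨n, x + w n, hnU, ?_⟩
  rwa [mem_preimage, map_add, hwy]

end ContinuousLinearMap

open Complex
open scoped Real

theorem dense_span_image_inter_of_accPt {B : Type*} [NormedAddCommGroup B] [NormedSpace ℂ B]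
    {Ω : Set ℂ} {F : ℂ → B} (hΩ : IsOpen Ω) (hΩc : IsPreconnected Ω)
    (hHol : ∀ φ : B →L[ℂ] ℂ, DifferentiableOn ℂ (fun z => φ (F z)) Ω)
    (hTotal : ∀ φ : B →L[ℂ] ℂ, (∀ z ∈ Ω, φ (F z) = 0) → φ = 0)
    {z₀ : ℂ} (hz₀ : z₀ ∈ Ω) {S : Set ℂ} (hS : AccPt z₀ (𝓟 S)) :
    Dense (Submodule.span ℂ (F '' (Ω ∩ S)) : Set B) := by
  refine dense_span_of_forall_dual_eq_zero fun φ hφ => hTotal φ fun z hz => ?_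
  have hfreq : ∃ᶠ z in 𝓝[≠] z₀, φ (F z) = 0 :=
    (accPt_iff_frequently_nhdsNE.1 (hS.nhds_inter (hΩ.mem_nhds hz₀))).mono
      fun z hz => hφ _ (mem_image_of_mem F hz)
  exact ((hHol φ).analyticOnNhd hΩ).eqOn_zero_of_preconnected_of_frequently_eq_zero
    hΩc hz₀ hfreq hz

theorem accPt_setOf_re_neg {z : ℂ} (hz : z.re = 0) : AccPt z (𝓟 {w : ℂ | w.re < 0}) := by
  rw [accPt_iff_frequently_nhdsNE, ← mem_closure_ne_iff_frequently_within,
    sdiff_singleton_eq_self (by simp [hz]), closure_setOfPred_re_lt]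
  exact hz.le

theorem accPt_setOf_re_pos {z : ℂ} (hz : z.re = 0) : AccPt z (𝓟 {w : ℂ | 0 < w.re}) := by
  rw [accPt_iff_frequently_nhdsNE, ← mem_closure_ne_iff_frequently_within,
    sdiff_singleton_eq_self (by simp [hz]), closure_setOfPred_lt_re]
  exact hz.ge

theorem accPt_range_I_mul_ratCast (y : ℝ) :
    AccPt (I * y) (𝓟 (range fun q : ℚ => I * ((q : ℝ) : ℂ))) := by
  have hℚ : AccPt y (𝓟 (range ((↑) : ℚ → ℝ))) := by
    rw [accPt_iff_frequently_nhdsNE, ← mem_closure_ne_iff_frequently_within,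
      (Rat.denseRange_cast.sdiff_singleton y).closure_eq]
    trivial
  have := hℚ.map (f := fun y : ℝ => I * y) (by fun_prop)
    ((mul_right_injective₀ I_ne_zero).comp ofReal_injective)
  rw [map_principal, ← range_comp] at this
  exact this

theorem exp_two_pi_mul_I_mul_ratCast_pow_den (q : ℚ) :
    exp (((2 * π : ℝ) : ℂ) * (I * ((q : ℝ) : ℂ))) ^ q.den = 1 := by
  have hq : (q : ℂ) * q.den = q.num := by exact_mod_cast Rat.mul_den_eq_num q
  rw [← exp_nat_mul, ← exp_int_mul_two_pi_mul_I q.num, ← hq]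
  push_cast
  ring_nf

theorem pow_eq_natCast_mul_of_map_add {M : Type*} [Monoid M] {T : ℝ → M} (h0 : T 0 = 1)
    (hadd : ∀ s t : ℝ, 0 ≤ s → 0 ≤ t → T (s + t) = T s * T t) {t : ℝ} (ht : 0 ≤ t) (n : ℕ) :
    T t ^ n = T (n * t) := by
  induction n with
  | zero => simp [h0]
  | succ n ih => rw [pow_succ, ih, ← hadd _ _ (by positivity) ht]; push_cast; ring_nf

theorem dsw_chaos_criterion_general
    {B : Type*} [NormedAddCommGroup B] [NormedSpace ℂ B] [CompleteSpace B]
    [TopologicalSpace.SeparableSpace B]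
    (T : ℝ → B →L[ℂ] B)
    (hT0 : T 0 = 1)
    (hTadd : ∀ s t : ℝ, 0 ≤ s → 0 ≤ t → T (s + t) = (T s).comp (T t))
    (Ω : Set ℂ) (hΩopen : IsOpen Ω) (hΩconn : IsConnected Ω)
    (hΩim : ∃ y : ℝ, (Complex.I * (y : ℂ)) ∈ Ω)
    (F : ℂ → B)
    (hEig : ∀ z ∈ Ω, ∀ t : ℝ, 0 ≤ t → T t (F z) = Complex.exp ((t : ℂ) * z) • F z)
    (hHol : ∀ φ : B →L[ℂ] ℂ, DifferentiableOn ℂ (fun z => φ (F z)) Ω)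
    (hTotal : ∀ φ : B →L[ℂ] ℂ, (∀ z ∈ Ω, φ (F z) = 0) → φ = 0) :
    (∃ f : B, Dense ((fun t => T t f) '' Set.Ici (0 : ℝ))) ∧
      Dense {f : B | ∃ t : ℝ, 0 < t ∧ T t f = f} := by
  obtain ⟨y₀, hy₀⟩ := hΩim
  have hTpow : ∀ t : ℝ, 0 ≤ t → ∀ n : ℕ, T t ^ n = T (n * t) :=
    fun t ht => pow_eq_natCast_mul_of_map_add hT0 hTadd ht
  have hdense : ∀ S, AccPt (I * y₀) (𝓟 S) → Dense (Submodule.span ℂ (F '' (Ω ∩ S)) : Set B) :=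
    fun S => dense_span_image_inter_of_accPt hΩopen hΩconn.isPreconnected hHol hTotal hy₀
  have hstable : Dense ((T 1).stableSubmodule : Set B) :=
    (hdense _ (accPt_setOf_re_neg (by simp))).mono <| Submodule.span_le.2 <| by
      rintro _ ⟨z, ⟨hz, hre⟩, rfl⟩
      exact ContinuousLinearMap.mem_stableSubmodule_of_apply_eq_smul
        (by rwa [norm_exp, Real.exp_lt_one_iff]) (by simpa using hEig z hz 1 zero_le_one)
  have hunstable : Dense ((T 1).unstableSubmodule : Set B) :=
    (hdense _ (accPt_setOf_re_pos (by simp))).mono <| Submodule.span_le.2 <| by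
      rintro _ ⟨z, ⟨hz, hre⟩, rfl⟩
      exact ContinuousLinearMap.mem_unstableSubmodule_of_apply_eq_smul
        (by rwa [norm_exp, Real.one_lt_exp_iff]) (by simpa using hEig z hz 1 zero_le_one)
  have hperiodic : Dense ((T (2 * π)).periodicSubmodule : Set B) :=
    (hdense _ (accPt_range_I_mul_ratCast y₀)).mono <| Submodule.span_le.2 <| by
      rintro _ ⟨_, ⟨hz, q, rfl⟩, rfl⟩
      exact ContinuousLinearMap.mem_periodicSubmodule_of_apply_eq_smul q.den_pos
        (exp_two_pi_mul_I_mul_ratCast_pow_den q) (hEig _ hz _ (by positivity))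
  have : SecondCountableTopology B := UniformSpace.secondCountable_of_separable B
  obtain ⟨f, hf⟩ := exists_dense_orbit_of_forall_exists_inter_preimage
    (fun n : ℕ => (T 1 ^ n).continuous)
    fun _ _ hU hUne hV hVne =>
      (T 1).exists_inter_preimage_pow_of_dense hstable hunstable hU hUne hV hVne
  refine ⟨⟨f, hf.mono ?_⟩, hperiodic.mono ?_⟩
  · rintro _ ⟨n, rfl⟩
    refine ⟨n, mem_Ici.2 n.cast_nonneg, ?_⟩
    simp only [hTpow 1 zero_le_one, mul_one]
  · rintro x ⟨n, hn, hx⟩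
    refine ⟨n * (2 * π), by positivity, ?_⟩
    rwa [← hTpow _ (by positivity), FunLike.coe_pow_eq_iterate]

/-- **Desch–Schappacher–Webb chaos criterion.** If a C₀-semigroup on a separable
complex Banach space admits a family of eigenvectors `F : Ω → B`, parametrized by an
open connected set `Ω ⊆ ℂ` meeting the imaginary axis, that is weakly holomorphic and
total (no nonzero functional annihilates all `F λ`), then the semigroup is chaotic. -/
theorem dsw_chaos_criterion
    {B : Type*} [NormedAddCommGroup B] [NormedSpace ℂ B] [CompleteSpace B]
    [TopologicalSpace.SeparableSpace B]
    (T : ℝ → B →L[ℂ] B)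
    (hT0 : T 0 = 1)
    (hTadd : ∀ s t : ℝ, 0 ≤ s → 0 ≤ t → T (s + t) = (T s).comp (T t))
    (hTcont : ∀ f : B, ContinuousOn (fun t => T t f) (Set.Ici (0 : ℝ)))
    (Ω : Set ℂ) (hΩopen : IsOpen Ω) (hΩconn : IsConnected Ω)
    (hΩim : ∃ y : ℝ, (Complex.I * (y : ℂ)) ∈ Ω)
    (F : ℂ → B)
    (hEig : ∀ z ∈ Ω, ∀ t : ℝ, 0 ≤ t → T t (F z) = Complex.exp ((t : ℂ) * z) • F z)
    (hHol : ∀ φ : B →L[ℂ] ℂ, DifferentiableOn ℂ (fun z => φ (F z)) Ω)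
    (hTotal : ∀ φ : B →L[ℂ] ℂ, (∀ z ∈ Ω, φ (F z) = 0) → φ = 0) :
    (∃ f : B, Dense ((fun t => T t f) '' Set.Ici (0 : ℝ))) ∧
      Dense {f : B | ∃ t : ℝ, 0 < t ∧ T t f = f} :=
  dsw_chaos_criterion_general T hT0 hTadd Ω hΩopen hΩconn hΩim F hEig hHol hTotal
end

section
/- Let B be a complex Banach space, Ω ⊆ ℂ an open connected set, and F : Ω → B a map such that for every continuous linear functional φ on B the map λ ↦ φ(F λ) is holomorphic on Ω, and such that the only continuous linear functional φ with φ(F λ) = 0 for all λ ∈ Ω is φ = 0. If U ⊆ Ω is any subset that has an accumulation point belonging to Ω, then the linear span of {F λ : λ ∈ U} is dense in B. -/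
/-- If `F : Ω → B` is weakly holomorphic on an open connected `Ω ⊆ ℂ` and total
(only the zero functional annihilates all `F λ`), then for any `U ⊆ Ω` having an
accumulation point inside `Ω`, the linear span of `F '' U` is dense in `B`. -/
theorem dense_span_of_accumulation
    {B : Type*} [NormedAddCommGroup B] [NormedSpace ℂ B] [CompleteSpace B]
    (Ω : Set ℂ) (hΩopen : IsOpen Ω) (hΩconn : IsConnected Ω)
    (F : ℂ → B)
    (hHol : ∀ φ : B →L[ℂ] ℂ, DifferentiableOn ℂ (fun z => φ (F z)) Ω)
    (hTotal : ∀ φ : B →L[ℂ] ℂ, (∀ z ∈ Ω, φ (F z) = 0) → φ = 0)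
    (U : Set ℂ) (hU : U ⊆ Ω)
    (z₀ : ℂ) (hz₀ : z₀ ∈ Ω) (hacc : AccPt z₀ (Filter.principal U)) :
    Dense ((Submodule.span ℂ (F '' U) : Submodule ℂ B) : Set B) := by
  set M : Submodule ℂ B := Submodule.span ℂ (F '' U) with hM
  by_contra hdense
  rw [dense_iff_closure_eq] at hdense
  obtain ⟨x, hx⟩ : ∃ x : B, x ∉ closure (M : Set B) := by
    by_contra h
    push_neg at h
    exact hdense (Set.eq_univ_of_forall h)
  -- real geometric Hahn-Banach: separate x from the closed convex set closure M
  have hconv : Convex ℝ (M : Set B) := (M.restrictScalars ℝ).convex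
  obtain ⟨f, u, hfs, hfx⟩ := geometric_hahn_banach_closed_point
    hconv.closure isClosed_closure hx
  -- f vanishes on closure M (it is bounded above on a subspace)
  have hf0 : ∀ y ∈ closure (M : Set B), f y = 0 := by
    intro y hy
    by_contra hfy
    have hmem : ∀ c : ℝ, c • y ∈ closure (M : Set B) := by
      intro c
      have h2 : closure (M : Set B) = (M.topologicalClosure : Set B) := rfl
      rw [h2] at hy ⊢
      rw [← Complex.coe_smul]
      exact M.topologicalClosure.smul_mem _ hy
    have h1 := hfs _ (hmem ((u + 1) / f y))
    rw [map_smul] at h1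
    simp only [smul_eq_mul, div_mul_cancel₀ _ hfy] at h1
    linarith
  -- extend f to a complex functional φ
  set φ : B →L[ℂ] ℂ := f.extendTo𝕜' with hφ
  have hφ0 : ∀ y ∈ closure (M : Set B), φ y = 0 := by
    intro y hy
    have hIy : (Complex.I : ℂ) • y ∈ closure (M : Set B) := by
      have : closure (M : Set B) = (M.topologicalClosure : Set B) := rfl
      rw [this] at hy ⊢
      exact M.topologicalClosure.smul_mem _ hy
    have : φ y = (f y : ℂ) - Complex.I * (f (Complex.I • y) : ℂ) :=
      ContinuousLinearMap.extendTo𝕜'_apply f y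
    rw [this, hf0 y hy, hf0 _ hIy]
    simp
  -- φ ∘ F vanishes on U
  have hφU : ∀ z ∈ U, φ (F z) = 0 := fun z hz =>
    hφ0 _ (subset_closure (Submodule.subset_span ⟨z, hz, rfl⟩))
  -- identity theorem: φ ∘ F vanishes on all of Ω
  have hAn : AnalyticOnNhd ℂ (fun z => φ (F z)) Ω := (hHol φ).analyticOnNhd hΩopen
  have hfreq : ∃ᶠ z in nhdsWithin z₀ {z₀}ᶜ, φ (F z) = 0 := by
    rw [accPt_iff_frequently] at hacc
    rw [frequently_nhdsWithin_iff]
    exact hacc.mono fun y ⟨hyne, hyU⟩ => ⟨hφU y hyU, by simpa using hyne⟩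
  have hzero : ∀ z ∈ Ω, φ (F z) = 0 :=
    fun z hz => hAn.eqOn_zero_of_preconnected_of_frequently_eq_zero
      hΩconn.isPreconnected hz₀ hfreq hz
  -- totality forces φ = 0, contradicting the separation
  have : φ = 0 := hTotal φ hzero
  have hx0 : φ x = 0 := by rw [this]; rfl
  have hφx : (f x : ℂ) - Complex.I * (f (Complex.I • x) : ℂ) = 0 := by
    have h3 : φ x = (f x : ℂ) - Complex.I * (f (Complex.I • x) : ℂ) :=
      ContinuousLinearMap.extendTo𝕜'_apply f x
    rw [← h3, hx0]
  have hre := congrArg Complex.re hφx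
  simp at hre
  have h0s : (0 : B) ∈ closure (M : Set B) := subset_closure M.zero_mem
  have hu0 := hfs 0 h0s
  rw [map_zero] at hu0
  linarith
end

section
/- Let B be a separable complex Banach space and let (T t)_{t≥0} be a C₀-semigroup on B. Suppose there exist an open connected set Ω ⊆ ℂ with Ω ∩ iℝ ≠ ∅ and a map F : Ω → B with F not identically zero, such that (i) for every λ ∈ Ω and every t ≥ 0 one has T t (F λ) = exp(t·λ) • F λ, and (ii) for every continuous linear functional φ on B the map λ ↦ φ(F λ) is holomorphic on Ω. Then, setting V equal to the closure of the linear span of {F λ : λ ∈ Ω}, the subspace V is a nonzero closed subspace of B, V is invariant under every T t, and the restriction of T to V is chaotic: there exists g ∈ V whose orbit {T t g : t ≥ 0} is dense in V, and the set {f ∈ V : ∃ t > 0, T t f = f} is dense in V. In particular T is subspace chaotic. -/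
/-!
Eigenvectors `F λ` span a space on which the semigroup acts explicitly, and by the identity
theorem (applied to `φ ∘ F` for functionals `φ` vanishing on a subspace, via Hahn–Banach) the
eigenvectors with `λ` in any set accumulating at a point `iy₀ ∈ Ω` already span a dense subspace
of `V`. Taking `Re λ < 0`, `Re λ > 0` and `λ ∈ iℚ` gives three dense subspaces: one on which
`T t → 0`, one whose vectors `y` have preimages `T t (u t) = y` with `u t → 0`, and one of
periodic points. The first two make `T` topologically transitive on `V`
(Desch–Schappacher–Webb), so Baire's theorem yields a dense orbit.
-/

open Filter Topology Set Submodule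

theorem exists_denseRange_orbit_of_transitive {X ι : Type*} [TopologicalSpace X] [BaireSpace X]
    [SecondCountableTopology X] [Nonempty X] {f : ι → X → X} (hf : ∀ i, Continuous (f i))
    (htrans : ∀ U W : Set X, IsOpen U → IsOpen W → U.Nonempty → W.Nonempty →
      ∃ i, (U ∩ f i ⁻¹' W).Nonempty) :
    ∃ x, DenseRange fun i => f i x := by
  obtain ⟨b, hbc, -, hb⟩ := TopologicalSpace.exists_countable_basis X
  have hopen : ∀ W ∈ {W ∈ b | W.Nonempty}, IsOpen (⋃ i, f i ⁻¹' W) := fun W hW =>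
    isOpen_iUnion fun i => (hb.isOpen hW.1).preimage (hf i)
  have hdense : ∀ W ∈ {W ∈ b | W.Nonempty}, Dense (⋃ i, f i ⁻¹' W) := by
    refine fun W hW => dense_iff_inter_open.2 fun U hU hUne => ?_
    obtain ⟨i, x, hx⟩ := htrans U W hU (hb.isOpen hW.1) hUne hW.2
    exact ⟨x, hx.1, mem_iUnion.2 ⟨i, hx.2⟩⟩
  obtain ⟨x, hx⟩ := (dense_biInter_of_isOpen hopen (hbc.mono (sep_subset _ _)) hdense).nonempty
  refine ⟨x, hb.dense_iff.2 fun W hW hne => ?_⟩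
  obtain ⟨i, hi⟩ := mem_iUnion.1 (mem_iInter₂.1 hx W ⟨hW, hne⟩)
  exact ⟨f i x, hi, i, rfl⟩

theorem exists_dual_eq_zero_of_notMem_topologicalClosure {𝕜 E : Type*} [RCLike 𝕜]
    [NormedAddCommGroup E] [NormedSpace 𝕜 E] {W : Submodule 𝕜 E} {x : E}
    (hx : x ∉ W.topologicalClosure) :
    ∃ φ : E →L[𝕜] 𝕜, (∀ w ∈ W, φ w = 0) ∧ φ x ≠ 0 := by
  obtain ⟨g, -, hg⟩ := exists_dual_vector'' 𝕜 (W.mkQ x)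
  have hnorm : ‖W.mkQ x‖ = 0 ↔ x ∈ closure (W : Set E) :=
    QuotientAddGroup.norm_mk_eq_zero_iff_mem_closure (S := W.toAddSubgroup)
  refine ⟨g.comp W.mkQL, fun w hw => ?_, ?_⟩
  · simp [(Submodule.Quotient.mk_eq_zero _).2 hw]
  · change g (W.mkQ x) ≠ 0
    rwa [hg, Ne, RCLike.ofReal_eq_zero, hnorm]

theorem topologicalClosure_span_image_le {B : Type*} [NormedAddCommGroup B] [NormedSpace ℂ B]
    {Ω S : Set ℂ} (hΩ : IsOpen Ω) (hΩc : IsPreconnected Ω) {F : ℂ → B}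
    (hF : ∀ φ : B →L[ℂ] ℂ, DifferentiableOn ℂ (fun z => φ (F z)) Ω) {z₀ : ℂ} (hz₀ : z₀ ∈ Ω)
    (hS : ∃ᶠ z in 𝓝[≠] z₀, z ∈ S) :
    (span ℂ (F '' Ω)).topologicalClosure ≤ (span ℂ (F '' (S ∩ Ω))).topologicalClosure := by
  intro x hx
  by_contra hxS
  obtain ⟨φ, hφS, hφx⟩ := exists_dual_eq_zero_of_notMem_topologicalClosure hxS
  have hSΩ : ∃ᶠ z in 𝓝[≠] z₀, z ∈ S ∩ Ω :=
    hS.and_eventually (eventually_nhdsWithin_of_eventually_nhds (hΩ.mem_nhds hz₀))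
  have hφF : EqOn (fun z => φ (F z)) 0 Ω :=
    ((hF φ).analyticOnNhd hΩ).eqOn_zero_of_preconnected_of_frequently_eq_zero hΩc hz₀
      (hSΩ.mono fun z hz => hφS _ (subset_span (mem_image_of_mem F hz)))
  have hker : span ℂ (F '' Ω) ≤ LinearMap.ker (φ : B →ₗ[ℂ] ℂ) :=
    span_le.2 <| forall_mem_image.2 fun z hz => hφF hz
  exact hφx (topologicalClosure_minimal _ hker φ.isClosed_ker hx)

theorem ContinuousLinearMap.mapsTo_topologicalClosure_span {𝕜 E : Type*} [Semiring 𝕜]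
    [TopologicalSpace E] [AddCommMonoid E] [Module 𝕜 E] [ContinuousAdd E] [ContinuousConstSMul 𝕜 E]
    (L : E →L[𝕜] E) {s : Set E} (hs : MapsTo L s (span 𝕜 s)) :
    MapsTo L (span 𝕜 s).topologicalClosure (span 𝕜 s).topologicalClosure := fun _ hx =>
  map_mem_closure L.continuous hx (span_le (p := (span 𝕜 s).comap (L : E →ₗ[𝕜] E)) |>.2 hs)

theorem Complex.frequently_lt_re_nhdsNE (z : ℂ) : ∃ᶠ w in 𝓝[≠] z, z.re < w.re := by
  refine (mem_closure_ne_iff_frequently_within (s := {w : ℂ | z.re < w.re})).1 ?_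
  rw [sdiff_singleton_eq_self (lt_irrefl z.re : z ∉ _), closure_setOfPred_lt_re]
  exact le_refl z.re

theorem Complex.frequently_re_lt_nhdsNE (z : ℂ) : ∃ᶠ w in 𝓝[≠] z, w.re < z.re := by
  refine (mem_closure_ne_iff_frequently_within (s := {w : ℂ | w.re < z.re})).1 ?_
  rw [sdiff_singleton_eq_self (lt_irrefl z.re : z ∉ _), closure_setOfPred_re_lt]
  exact le_refl z.re

theorem Complex.frequently_I_mul_ratCast_nhdsNE (y : ℝ) :
    ∃ᶠ w in 𝓝[≠] (I * y), w ∈ range fun q : ℚ => I * (q : ℂ) := by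
  refine mem_closure_ne_iff_frequently_within.1 ?_
  refine map_mem_closure (f := fun r : ℝ => I * r) (by fun_prop)
    (Rat.denseRange_cast.sdiff_singleton y y) ?_
  rintro _ ⟨⟨q, rfl⟩, hq⟩
  refine ⟨⟨q, by simp⟩, fun h => hq ?_⟩
  exact_mod_cast (by simpa [I_ne_zero] using h : (q : ℂ) = y)

theorem Complex.exp_two_pi_mul_natCast_mul_I_mul_ratCast {q : ℚ} {M : ℕ} (hM : q.den ∣ M) :
    exp (((2 * Real.pi * M : ℝ) : ℂ) * (I * q)) = 1 := by
  obtain ⟨k, rfl⟩ := hM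
  have hq : (q : ℂ) * q.den = q.num := by exact_mod_cast Rat.mul_den_eq_num q
  rw [exp_eq_one_iff]
  refine ⟨q.num * k, ?_⟩
  push_cast
  linear_combination (2 * Real.pi * I * k) * hq

theorem Complex.tendsto_exp_mul_smul_atTop {E : Type*} [NormedAddCommGroup E] [NormedSpace ℂ E]
    {z : ℂ} (hz : z.re < 0) (v : E) :
    Tendsto (fun t : ℝ => exp (t * z) • v) atTop (𝓝 0) := by
  have hre : Tendsto (fun t : ℝ => (t * z : ℂ)) atTop (comap re atBot) := by
    rw [tendsto_comap_iff]
    simpa [Function.comp_def] using tendsto_id.atTop_mul_const_of_neg hz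
  simpa using (tendsto_exp_comap_re_atBot.comp hre).smul_const v

section EigenvectorField

variable {B : Type*} [NormedAddCommGroup B] [NormedSpace ℂ B] {T : ℝ → B →L[ℂ] B}
  {F : ℂ → B} {S : Set ℂ}

theorem tendsto_apply_atTop_zero_of_mem_span
    (hEig : ∀ z ∈ S, ∀ t : ℝ, 0 ≤ t → T t (F z) = Complex.exp ((t : ℂ) * z) • F z)
    (hS : ∀ z ∈ S, z.re < 0) {x : B} (hx : x ∈ span ℂ (F '' S)) :
    Tendsto (fun t => T t x) atTop (𝓝 0) := by
  induction hx using span_induction with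
  | mem _ h =>
    obtain ⟨z, hz, rfl⟩ := h
    refine (Complex.tendsto_exp_mul_smul_atTop (hS z hz) (F z)).congr' ?_
    filter_upwards [eventually_ge_atTop 0] with t ht using (hEig z hz t ht).symm
  | zero => simp
  | add x y _ _ hx hy => simpa using hx.add hy
  | smul c x _ hx => simpa using hx.const_smul c

theorem exists_tendsto_zero_apply_eq_of_mem_span
    (hEig : ∀ z ∈ S, ∀ t : ℝ, 0 ≤ t → T t (F z) = Complex.exp ((t : ℂ) * z) • F z)
    (hS : ∀ z ∈ S, 0 < z.re) {y : B} (hy : y ∈ span ℂ (F '' S)) :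
    ∃ u : ℝ → B, (∀ t, u t ∈ span ℂ (F '' S)) ∧ Tendsto u atTop (𝓝 0) ∧
      ∀ᶠ t in atTop, T t (u t) = y := by
  induction hy using span_induction with
  | mem _ h =>
    obtain ⟨z, hz, rfl⟩ := h
    refine ⟨fun t => Complex.exp (t * -z) • F z, fun t => smul_mem _ _ (subset_span ⟨z, hz, rfl⟩),
      Complex.tendsto_exp_mul_smul_atTop (by simpa using hS z hz) _, ?_⟩
    filter_upwards [eventually_ge_atTop 0] with t ht
    rw [map_smul, hEig z hz t ht, smul_smul, ← Complex.exp_add]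
    simp
  | zero => exact ⟨0, fun _ => zero_mem _, tendsto_const_nhds, by simp⟩
  | add x y _ _ hx hy =>
    obtain ⟨u, hu, hu0, hTu⟩ := hx
    obtain ⟨v, hv, hv0, hTv⟩ := hy
    refine ⟨fun t => u t + v t, fun t => add_mem (hu t) (hv t), by simpa using hu0.add hv0, ?_⟩
    filter_upwards [hTu, hTv] with t hut hvt
    simp [hut, hvt]
  | smul c x _ hx =>
    obtain ⟨u, hu, hu0, hTu⟩ := hx
    refine ⟨fun t => c • u t, fun t => smul_mem _ c (hu t), by simpa using hu0.const_smul c, ?_⟩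
    filter_upwards [hTu] with t hut
    simp [hut]

-- Periods are recorded as all multiples of `2πN`, so that `2πN₁N₂` is a common period of a sum.
theorem exists_pos_forall_dvd_apply_eq_of_mem_span
    (hEig : ∀ z ∈ S, ∀ t : ℝ, 0 ≤ t → T t (F z) = Complex.exp ((t : ℂ) * z) • F z)
    (hS : S ⊆ range fun q : ℚ => Complex.I * (q : ℂ)) {x : B} (hx : x ∈ span ℂ (F '' S)) :
    ∃ N : ℕ, 0 < N ∧ ∀ M : ℕ, N ∣ M → T (2 * Real.pi * M) x = x := by
  induction hx using span_induction with
  | mem _ h =>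
    obtain ⟨z, hz, rfl⟩ := h
    obtain ⟨q, rfl⟩ := hS hz
    refine ⟨q.den, q.den_pos, fun M hM => ?_⟩
    rw [hEig _ hz _ (by positivity), Complex.exp_two_pi_mul_natCast_mul_I_mul_ratCast hM, one_smul]
  | zero => exact ⟨1, one_pos, by simp⟩
  | add x y _ _ hx hy =>
    obtain ⟨N₁, hN₁, hx⟩ := hx
    obtain ⟨N₂, hN₂, hy⟩ := hy
    refine ⟨N₁ * N₂, mul_pos hN₁ hN₂, fun M hM => ?_⟩
    rw [map_add, hx M (dvd_of_mul_right_dvd hM), hy M (dvd_of_mul_left_dvd hM)]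
  | smul c x _ hx =>
    obtain ⟨N, hN, hx⟩ := hx
    exact ⟨N, hN, fun M hM => by rw [map_smul, hx M hM]⟩

end EigenvectorField

section DenseOrbit

variable {𝕜 B : Type*} [NormedField 𝕜] [NormedAddCommGroup B] [NormedSpace 𝕜 B]
  {T : ℝ → B →L[𝕜] B}

theorem eventually_add_mem_and_apply_add_mem {x y : B} {u : ℝ → B} {U W : Set B}
    (hx : Tendsto (fun t => T t x) atTop (𝓝 0)) (hu : Tendsto u atTop (𝓝 0))
    (hTu : ∀ᶠ t in atTop, T t (u t) = y) (hU : U ∈ 𝓝 x) (hW : W ∈ 𝓝 y) :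
    ∀ᶠ t in atTop, x + u t ∈ U ∧ T t (x + u t) ∈ W := by
  have hxu : Tendsto (fun t => x + u t) atTop (𝓝 x) := by
    simpa using tendsto_const_nhds.add hu
  have hTxu : Tendsto (fun t => T t (x + u t)) atTop (𝓝 y) := by
    refine (zero_add y ▸ hx.add tendsto_const_nhds).congr' ?_
    filter_upwards [hTu] with t ht
    rw [map_add, ht]
  exact (hxu.eventually_mem hU).and (hTxu.eventually_mem hW)

theorem exists_dense_orbit_of_tendsto_zero [CompleteSpace B] [TopologicalSpace.SeparableSpace B]
    {V : Submodule 𝕜 B} (hV : IsClosed (V : Set B)) (hTV : ∀ t : ℝ, 0 ≤ t → ∀ f ∈ V, T t f ∈ V)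
    {D₀ D₁ : Set B} (hD₀V : D₀ ⊆ V) (hVD₀ : (V : Set B) ⊆ closure D₀)
    (hVD₁ : (V : Set B) ⊆ closure D₁) (hD₀ : ∀ x ∈ D₀, Tendsto (fun t => T t x) atTop (𝓝 0))
    (hD₁ : ∀ y ∈ D₁, ∃ u : ℝ → B, (∀ t, u t ∈ V) ∧ Tendsto u atTop (𝓝 0) ∧
      ∀ᶠ t in atTop, T t (u t) = y) :
    ∃ g ∈ V, ∀ x ∈ V, x ∈ closure ((fun t => T t g) '' Ici 0) := by
  have : CompleteSpace V := hV.completeSpace_coe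
  let f : Ici (0 : ℝ) → V → V := fun t g => ⟨T t g, hTV t t.2 g g.2⟩
  have hf : ∀ t, Continuous (f t) := fun t =>
    ((T t).continuous.comp continuous_subtype_val).subtype_mk _
  have htrans : ∀ U W : Set V, IsOpen U → IsOpen W → U.Nonempty → W.Nonempty →
      ∃ t, (U ∩ f t ⁻¹' W).Nonempty := by
    intro U' W' hU' hW' ⟨v, hv⟩ ⟨w, hw⟩
    obtain ⟨U, hU, rfl⟩ := isOpen_induced_iff.1 hU'
    obtain ⟨W, hW, rfl⟩ := isOpen_induced_iff.1 hW'
    obtain ⟨x, hxU, hx⟩ := mem_closure_iff.1 (hVD₀ v.2) U hU hv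
    obtain ⟨y, hyW, hy⟩ := mem_closure_iff.1 (hVD₁ w.2) W hW hw
    obtain ⟨u, huV, hu, hTu⟩ := hD₁ y hy
    obtain ⟨t, ht, hxuU, hTxuW⟩ := ((eventually_ge_atTop 0).and
      (eventually_add_mem_and_apply_add_mem (hD₀ x hx) hu hTu (hU.mem_nhds hxU)
        (hW.mem_nhds hyW))).exists
    exact ⟨⟨t, ht⟩, ⟨x + u t, add_mem (hD₀V hx) (huV t)⟩, hxuU, hTxuW⟩
  have : Nonempty V := ⟨0⟩
  obtain ⟨g, hg⟩ := exists_denseRange_orbit_of_transitive hf htrans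
  refine ⟨g, g.2, fun x hx => ?_⟩
  refine closure_mono ?_ (Subtype.dense_iff.1 hg hx)
  rintro _ ⟨_, ⟨t, rfl⟩, rfl⟩
  exact ⟨t, t.2, rfl⟩

end DenseOrbit

theorem banasiak_moszynski_subspace_chaos_general
    {B : Type*} [NormedAddCommGroup B] [NormedSpace ℂ B] [CompleteSpace B]
    [TopologicalSpace.SeparableSpace B]
    (T : ℝ → B →L[ℂ] B)
    (Ω : Set ℂ) (hΩopen : IsOpen Ω) (hΩconn : IsConnected Ω)
    (hΩim : ∃ y : ℝ, (Complex.I * (y : ℂ)) ∈ Ω)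
    (F : ℂ → B) (hFne : ∃ z ∈ Ω, F z ≠ 0)
    (hEig : ∀ z ∈ Ω, ∀ t : ℝ, 0 ≤ t → T t (F z) = Complex.exp ((t : ℂ) * z) • F z)
    (hHol : ∀ φ : B →L[ℂ] ℂ, DifferentiableOn ℂ (fun z => φ (F z)) Ω)
    (V : Submodule ℂ B)
    (hV : V = (Submodule.span ℂ (F '' Ω)).topologicalClosure) :
    V ≠ ⊥ ∧
      (∀ t : ℝ, 0 ≤ t → ∀ f ∈ V, T t f ∈ V) ∧
      (∃ g ∈ V, ∀ x ∈ V, x ∈ closure ((fun t => T t g) '' Set.Ici (0 : ℝ))) ∧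
      (∀ x ∈ V, x ∈ closure {f : B | f ∈ V ∧ ∃ t : ℝ, 0 < t ∧ T t f = f}) := by
  obtain ⟨y₀, hy₀⟩ := hΩim
  have hdense : ∀ S : Set ℂ, (∃ᶠ z in 𝓝[≠] (Complex.I * y₀), z ∈ S) →
      (V : Set B) ⊆ closure (span ℂ (F '' (S ∩ Ω))) := fun S hS => hV ▸
    topologicalClosure_span_image_le hΩopen hΩconn.isPreconnected hHol hy₀ hS
  have hspan : ∀ S : Set ℂ, span ℂ (F '' (S ∩ Ω)) ≤ V := fun S => hV ▸
    (span_mono (image_mono inter_subset_right)).trans (le_topologicalClosure _)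
  have hEig' : ∀ S : Set ℂ, ∀ z ∈ S ∩ Ω, ∀ t : ℝ, 0 ≤ t →
      T t (F z) = Complex.exp ((t : ℂ) * z) • F z := fun S z hz => hEig z hz.2
  have hinv : ∀ t : ℝ, 0 ≤ t → ∀ f ∈ V, T t f ∈ V := by
    refine fun t ht => hV ▸ (T t).mapsTo_topologicalClosure_span ?_
    rintro _ ⟨z, hz, rfl⟩
    rw [hEig z hz t ht]
    exact smul_mem _ _ (subset_span ⟨z, hz, rfl⟩)
  have hneg : ∃ᶠ z in 𝓝[≠] (Complex.I * y₀), z ∈ {z : ℂ | z.re < 0} := by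
    simpa using Complex.frequently_re_lt_nhdsNE (Complex.I * y₀)
  have hpos : ∃ᶠ z in 𝓝[≠] (Complex.I * y₀), z ∈ {z : ℂ | 0 < z.re} := by
    simpa using Complex.frequently_lt_re_nhdsNE (Complex.I * y₀)
  refine ⟨?_, hinv, ?_, fun x hx => ?_⟩
  · obtain ⟨z, hz, hFz⟩ := hFne
    exact (Submodule.ne_bot_iff V).2 ⟨F z, hspan univ (subset_span ⟨z, ⟨trivial, hz⟩, rfl⟩), hFz⟩
  · refine exists_dense_orbit_of_tendsto_zero (hV ▸ isClosed_topologicalClosure _) hinv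
      (hspan _) (hdense _ hneg) (hdense _ hpos)
      (fun x => tendsto_apply_atTop_zero_of_mem_span (hEig' _) fun z hz => hz.1) fun y hy => ?_
    obtain ⟨u, hu, hu0, hTu⟩ :=
      exists_tendsto_zero_apply_eq_of_mem_span (hEig' _) (fun z hz => hz.1) hy
    exact ⟨u, fun t => hspan _ (hu t), hu0, hTu⟩
  · refine closure_mono ?_ (hdense _ (Complex.frequently_I_mul_ratCast_nhdsNE y₀) hx)
    intro f hf
    obtain ⟨N, hN, hper⟩ :=
      exists_pos_forall_dvd_apply_eq_of_mem_span (hEig' _) inter_subset_left hf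
    exact ⟨hspan _ hf, 2 * Real.pi * N, by positivity, hper N dvd_rfl⟩

/-- **Banasiak–Moszyński subspace chaos criterion.** If a C₀-semigroup on a separable
complex Banach space admits a not-identically-zero weakly holomorphic eigenvector field
`F : Ω → B` over an open connected `Ω ⊆ ℂ` meeting the imaginary axis, then the closed
subspace `V = closure (span (F '' Ω))` is nonzero, invariant under the semigroup, and the
restricted semigroup is chaotic on `V`: some orbit is dense in `V` and periodic points of
the restriction are dense in `V`. In particular the semigroup is subspace chaotic. -/
theorem banasiak_moszynski_subspace_chaos
    {B : Type*} [NormedAddCommGroup B] [NormedSpace ℂ B] [CompleteSpace B]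
    [TopologicalSpace.SeparableSpace B]
    (T : ℝ → B →L[ℂ] B)
    (hT0 : T 0 = 1)
    (hTadd : ∀ s t : ℝ, 0 ≤ s → 0 ≤ t → T (s + t) = (T s).comp (T t))
    (hTcont : ∀ f : B, ContinuousOn (fun t => T t f) (Set.Ici (0 : ℝ)))
    (Ω : Set ℂ) (hΩopen : IsOpen Ω) (hΩconn : IsConnected Ω)
    (hΩim : ∃ y : ℝ, (Complex.I * (y : ℂ)) ∈ Ω)
    (F : ℂ → B) (hFne : ∃ z ∈ Ω, F z ≠ 0)
    (hEig : ∀ z ∈ Ω, ∀ t : ℝ, 0 ≤ t → T t (F z) = Complex.exp ((t : ℂ) * z) • F z)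
    (hHol : ∀ φ : B →L[ℂ] ℂ, DifferentiableOn ℂ (fun z => φ (F z)) Ω)
    (V : Submodule ℂ B)
    (hV : V = (Submodule.span ℂ (F '' Ω)).topologicalClosure) :
    V ≠ ⊥ ∧
      (∀ t : ℝ, 0 ≤ t → ∀ f ∈ V, T t f ∈ V) ∧
      (∃ g ∈ V, ∀ x ∈ V, x ∈ closure ((fun t => T t g) '' Set.Ici (0 : ℝ))) ∧
      (∀ x ∈ V, x ∈ closure {f : B | f ∈ V ∧ ∃ t : ℝ, 0 < t ∧ T t f = f}) :=
  banasiak_moszynski_subspace_chaos_general T Ω hΩopen hΩconn hΩim F hFne hEig hHol V hV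
end

section
/- Let B be a finite-dimensional complex Banach space with B ≠ {0}. Then no C₀-semigroup (T t)_{t≥0} on B is hypercyclic: for every f ∈ B the orbit {T t f : t ≥ 0} is not dense in B. -/
/-!
Commuting operators on a nonzero finite-dimensional complex space have a common eigenvector.
Applied to the duals of the `T t`, this gives a functional `φ ≠ 0` with `φ ∘ T t = χ t • φ`, so
`φ` maps the orbit of `f` onto `{χ t * φ f | t ≥ 0}`, which would be dense in `ℂ` if the orbit
were. But `χ` is continuous and multiplicative, so writing `t = n + r` with `r ∈ [0, 1]`,
`‖χ t‖ = ‖χ 1‖ ^ n * ‖χ r‖` is bounded when `‖χ 1‖ ≤ 1` and bounded away from `0` otherwise.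
-/

open Module NNReal Set

theorem Module.End.exists_forall_apply_eq_smul_of_commute {K V ι : Type*} [Field K]
    [IsAlgClosed K] [AddCommGroup V] [Module K V] [FiniteDimensional K V] [Nontrivial V]
    (f : ι → End K V) (hf : ∀ i j, Commute (f i) (f j)) :
    ∃ v : V, v ≠ 0 ∧ ∃ χ : ι → K, ∀ i, f i v = χ i • v := by
  induction h : finrank K V using Nat.strong_induction_on generalizing V with
  | _ n ih =>
  by_cases hscalar : ∀ i, ∃ μ : K, eigenspace (f i) μ = ⊤
  · choose χ hχ using hscalar
    obtain ⟨v, hv⟩ := exists_ne (0 : V)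
    exact ⟨v, hv, χ, fun i => mem_eigenspace_iff.mp (hχ i ▸ Submodule.mem_top)⟩
  · -- An eigenspace of a non-scalar `f i` is a smaller nonzero space invariant under every `f j`.
    push Not at hscalar
    obtain ⟨i, hi⟩ := hscalar
    obtain ⟨μ, hμ⟩ := exists_eigenvalue (f i)
    have hE : ∀ j, MapsTo (f j) (eigenspace (f i) μ) (eigenspace (f i) μ) :=
      fun j => mapsTo_genEigenspace_of_comm (hf i j) μ 1
    have : Nontrivial (eigenspace (f i) μ) := Submodule.nontrivial_iff_ne_bot.mpr hμ
    obtain ⟨v, hv, χ, hχ⟩ := ih _ (h ▸ Submodule.finrank_lt (hi μ))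
      (fun j => (f j).restrict (hE j))
      (fun j k => LinearMap.restrict_commute (hf j k) (hE j) (hE k)) rfl
    exact ⟨v, by simpa using hv, χ, fun j => congrArg Subtype.val (hχ j)⟩

theorem exists_dual_forall_apply_eq_mul_of_commute {K V ι : Type*} [Field K]
    [IsAlgClosed K] [AddCommGroup V] [Module K V] [FiniteDimensional K V] [Nontrivial V]
    (f : ι → End K V) (hf : ∀ i j, Commute (f i) (f j)) :
    ∃ φ : Dual K V, φ ≠ 0 ∧ ∃ χ : ι → K, ∀ i x, φ (f i x) = χ i * φ x := by
  obtain ⟨φ, hφ, χ, hχ⟩ := End.exists_forall_apply_eq_smul_of_commute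
    (fun i => (f i).dualMap) fun i j => by
      ext φ x
      exact congrArg φ (LinearMap.congr_fun (hf j i).eq x)
  exact ⟨φ, hφ, χ, fun i x => by simpa using LinearMap.congr_fun (hχ i) x⟩

section MultiplicativeFunction

variable {χ : ℝ≥0 → ℂ}

theorem apply_natCast_add_eq_pow_mul (hχ : ∀ s t, χ (s + t) = χ s * χ t) (n : ℕ) (r : ℝ≥0) :
    χ (n + r) = χ 1 ^ n * χ r := by
  induction n with
  | zero => simp
  | succ n ih => rw [Nat.cast_succ, add_right_comm, add_comm _ 1, hχ, ih, pow_succ']; ring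

theorem exists_mem_Icc_eq_pow_mul (hχ : ∀ s t, χ (s + t) = χ s * χ t) (t : ℝ≥0) :
    ∃ n : ℕ, ∃ r ∈ Icc (0 : ℝ≥0) 1, χ t = χ 1 ^ n * χ r := by
  refine ⟨⌊t⌋₊, t - ⌊t⌋₊, ⟨zero_le, ?_⟩, ?_⟩
  · rw [tsub_le_iff_left]; exact (Nat.lt_floor_add_one t).le
  · rw [← apply_natCast_add_eq_pow_mul hχ, add_tsub_cancel_of_le (Nat.floor_le zero_le)]

theorem exists_forall_norm_le_of_norm_le_one (hχ : ∀ s t, χ (s + t) = χ s * χ t)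
    (hcont : Continuous χ) (h1 : ‖χ 1‖ ≤ 1) : ∃ M, ∀ t, ‖χ t‖ ≤ M := by
  obtain ⟨M, hM⟩ :=
    isCompact_Icc.exists_bound_of_continuousOn hcont.continuousOn (s := Icc (0 : ℝ≥0) 1)
  refine ⟨M, fun t => ?_⟩
  obtain ⟨n, r, hr, heq⟩ := exists_mem_Icc_eq_pow_mul hχ t
  calc ‖χ t‖ = ‖χ 1‖ ^ n * ‖χ r‖ := by rw [heq, norm_mul, norm_pow]
    _ ≤ 1 * M := by gcongr; exact pow_le_one₀ (norm_nonneg _) h1; exact hM r hr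
    _ = M := one_mul M

theorem exists_pos_forall_le_norm_of_one_lt_norm (hχ : ∀ s t, χ (s + t) = χ s * χ t)
    (hcont : Continuous χ) (h1 : 1 < ‖χ 1‖) : ∃ m > 0, ∀ t, m ≤ ‖χ t‖ := by
  -- `χ 1 = χ r * χ (1 - r)`, so `χ` has no zero on `[0, 1]`.
  have hne : ∀ r ∈ Icc (0 : ℝ≥0) 1, χ r ≠ 0 := by
    rintro r ⟨-, hr⟩ h0
    have := hχ r (1 - r)
    rw [add_tsub_cancel_of_le hr, h0, zero_mul] at this
    norm_num [this] at h1
  obtain ⟨r₀, hr₀, hmin⟩ := isCompact_Icc.exists_isMinOn (nonempty_Icc.mpr zero_le_one)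
    hcont.norm.continuousOn
  refine ⟨‖χ r₀‖, norm_pos_iff.mpr (hne r₀ hr₀), fun t => ?_⟩
  obtain ⟨n, r, hr, heq⟩ := exists_mem_Icc_eq_pow_mul hχ t
  calc ‖χ r₀‖ ≤ 1 * ‖χ r‖ := by rw [one_mul]; exact hmin hr
    _ ≤ ‖χ 1‖ ^ n * ‖χ r‖ := by gcongr; exact one_le_pow₀ h1.le
    _ = ‖χ t‖ := by rw [heq, norm_mul, norm_pow]

theorem not_dense_range_mul_const (hχ : ∀ s t, χ (s + t) = χ s * χ t)
    (hcont : Continuous χ) (c : ℂ) : ¬ Dense (range fun t => χ t * c) := by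
  have hbound : (∃ M, ∀ t, ‖χ t * c‖ ≤ M) ∨ ∃ m > 0, ∀ t, m ≤ ‖χ t * c‖ := by
    rcases eq_or_ne c 0 with rfl | hc
    · exact .inl ⟨0, by simp⟩
    rcases le_or_gt ‖χ 1‖ 1 with h1 | h1
    · obtain ⟨M, hM⟩ := exists_forall_norm_le_of_norm_le_one hχ hcont h1
      exact .inl ⟨M * ‖c‖, fun t => by rw [norm_mul]; gcongr; exact hM t⟩
    · obtain ⟨m, hm, hM⟩ := exists_pos_forall_le_norm_of_one_lt_norm hχ hcont h1
      exact .inr ⟨m * ‖c‖, by positivity, fun t => by rw [norm_mul]; gcongr; exact hM t⟩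
  intro hdense
  rcases hbound with ⟨M, hM⟩ | ⟨m, hm, hM⟩
  · have hsub : range (fun t => χ t * c) ⊆ Metric.closedBall 0 M := by
      rintro - ⟨t, rfl⟩; simpa using hM t
    have := closure_minimal hsub Metric.isClosed_closedBall (hdense ((|M| + 1 : ℝ) : ℂ))
    rw [Metric.mem_closedBall, dist_zero_right, Complex.norm_real, Real.norm_eq_abs] at this
    linarith [le_abs_self (|M| + 1), le_abs_self M]
  · have hsub : range (fun t => χ t * c) ⊆ {z | m ≤ ‖z‖} := by
      rintro - ⟨t, rfl⟩; exact hM t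
    have := closure_minimal hsub (isClosed_le continuous_const continuous_norm) (hdense 0)
    linarith [show m ≤ 0 by simpa using this]

end MultiplicativeFunction

section DualEigenvector

variable {B : Type*} [NormedAddCommGroup B] [NormedSpace ℂ B] {S : ℝ≥0 → B →L[ℂ] B}
  {φ : Dual ℂ B} {χ : ℝ≥0 → ℂ} {x₀ : B}

theorem map_add_eq_mul_of_dual_eigenvector (hφ : ∀ t x, φ (S t x) = χ t * φ x)
    (hx₀ : φ x₀ ≠ 0) (hS : ∀ s t, S (s + t) = (S s).comp (S t)) (s t : ℝ≥0) :
    χ (s + t) = χ s * χ t :=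
  mul_right_cancel₀ hx₀ <| by rw [← hφ, hS, ContinuousLinearMap.comp_apply, hφ, hφ, mul_assoc]

theorem continuous_of_dual_eigenvector [FiniteDimensional ℂ B]
    (hφ : ∀ t x, φ (S t x) = χ t * φ x) (hx₀ : φ x₀ ≠ 0)
    (hS : ∀ x, Continuous fun t => S t x) : Continuous χ := by
  have : χ = fun t => φ (S t x₀) / φ x₀ :=
    funext fun t => by rw [hφ, mul_div_cancel_right₀ _ hx₀]
  rw [this]
  exact ((LinearMap.continuous_of_finiteDimensional φ).comp (hS x₀)).div_const _

end DualEigenvector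

theorem no_hypercyclic_semigroup_finiteDimensional_general
    {B : Type*} [NormedAddCommGroup B] [NormedSpace ℂ B]
    [FiniteDimensional ℂ B] [Nontrivial B]
    (T : ℝ → B →L[ℂ] B)
    (hTadd : ∀ s t : ℝ, 0 ≤ s → 0 ≤ t → T (s + t) = (T s).comp (T t))
    (hTcont : ∀ g : B, ContinuousOn (fun t => T t g) (Set.Ici (0 : ℝ))) :
    ∀ f : B, ¬ Dense ((fun t => T t f) '' Set.Ici (0 : ℝ)) := by
  intro f hdense
  let S : ℝ≥0 → B →L[ℂ] B := fun t => T t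
  have hS : ∀ s t, S (s + t) = (S s).comp (S t) := fun s t => hTadd s t s.2 t.2
  have hcomm : ∀ s t, Commute (S s : End ℂ B) (S t) := fun s t => by
    ext x
    simp only [Module.End.mul_apply, ContinuousLinearMap.coe_coe, ← ContinuousLinearMap.comp_apply,
      ← hS, add_comm]
  obtain ⟨φ, hφ0, χ, hφ⟩ :=
    exists_dual_forall_apply_eq_mul_of_commute (fun t => (S t : End ℂ B)) hcomm
  obtain ⟨x₀, hx₀⟩ : ∃ x, φ x ≠ 0 := by
    by_contra! h
    exact hφ0 (LinearMap.ext h)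
  have hSc : ∀ x, Continuous fun t => S t x :=
    fun x => (hTcont x).comp_continuous continuous_coe fun t => t.2
  refine not_dense_range_mul_const (map_add_eq_mul_of_dual_eigenvector hφ hx₀ hS)
    (continuous_of_dual_eigenvector hφ hx₀ hSc) (φ f) ?_
  have horbit : (fun t => T t f) '' Ici 0 = range fun t => S t f := by
    rw [← NNReal.range_coe, ← range_comp]; rfl
  have himage : range (fun t => χ t * φ f) = φ '' range fun t => S t f := by
    rw [← range_comp]; exact congrArg range (funext fun t => (hφ t f).symm)
  rw [himage, ← horbit]
  exact (LinearMap.surjective_of_ne_zero hφ0).denseRange.dense_image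
    (LinearMap.continuous_of_finiteDimensional φ) hdense

/-- No C₀-semigroup on a nonzero finite-dimensional complex Banach space is
hypercyclic: no orbit is dense. -/
theorem no_hypercyclic_semigroup_finiteDimensional
    {B : Type*} [NormedAddCommGroup B] [NormedSpace ℂ B]
    [FiniteDimensional ℂ B] [Nontrivial B]
    (T : ℝ → B →L[ℂ] B)
    (hT0 : T 0 = 1)
    (hTadd : ∀ s t : ℝ, 0 ≤ s → 0 ≤ t → T (s + t) = (T s).comp (T t))
    (hTcont : ∀ g : B, ContinuousOn (fun t => T t g) (Set.Ici (0 : ℝ))) :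
    ∀ f : B, ¬ Dense ((fun t => T t f) '' Set.Ici (0 : ℝ)) :=
  no_hypercyclic_semigroup_finiteDimensional_general T hTadd hTcont
end

section
/- Let p > 2, r > 0, c ∈ ℝ, and set δ = r·(1 − 2/p), P = {r² + z² : z ∈ ℂ, |Im z| ≤ δ}, S = {w ∈ ℂ : Re w > 0 and |Im w| < δ}, and Ω = interior(P − c) \ {x ∈ ℝ : x ≤ r² − c}, where P − c = {w − c : w ∈ P}. Then the map g(w) = w² + r² − c is an injective holomorphic map from S onto Ω; in particular Ω is an open connected subset of ℂ, and if c > c_p := (4r²/p)·(1 − 1/p) then Ω ∩ iℝ ≠ ∅. -/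
/-!
Writing `z = x + iy`, one has `4δ²(Re z² + δ²) - (Im z²)² = 4(x² + δ²)(δ² - y²)`, so squaring
maps the strip `|Im z| ≤ δ` onto the parabolic region `(Im w)² ≤ 4δ²(Re w + δ²)` and the open
strip onto its interior. On the half-strip `Re z > 0` squaring is injective, and since every
point off `(-∞, 0]` has a square root of positive real part, its image is the open parabolic
region minus the slit `(-∞, 0]`. The map `g` is squaring followed by translation by `r² - c`,
which carries all of this over to `P - c` and `Ω`; the vertex of the translated parabola is
`r² - c - δ² = c_p - c`, which is negative exactly when `c > c_p`.
-/

open Complex Set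

def parabolicRegion (δ : ℝ) : Set ℂ := {w | w.im ^ 2 ≤ 4 * δ ^ 2 * (w.re + δ ^ 2)}

def openParabolicRegion (δ : ℝ) : Set ℂ := {w | w.im ^ 2 < 4 * δ ^ 2 * (w.re + δ ^ 2)}

section ParabolicRegion

variable {δ : ℝ}

lemma isOpen_openParabolicRegion (δ : ℝ) : IsOpen (openParabolicRegion δ) :=
  isOpen_lt (by fun_prop) (by fun_prop)

lemma interior_parabolicRegion (hδ : δ ≠ 0) :
    interior (parabolicRegion δ) = openParabolicRegion δ := by
  refine subset_antisymm (fun w hw => ?_) <|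
    interior_maximal (fun _ hw => le_of_lt (α := ℝ) hw) (isOpen_openParabolicRegion δ)
  obtain ⟨ε, hε, hball⟩ := Metric.mem_nhds_iff.mp (mem_interior_iff_mem_nhds.mp hw)
  have hshift : w - (ε / 2 : ℝ) ∈ parabolicRegion δ := hball <| by
    simp [abs_of_pos hε, hε]
  have : 0 < δ ^ 2 := by positivity
  simp only [parabolicRegion, mem_ofPred_eq, sub_re, sub_im, ofReal_re, ofReal_im,
    sub_zero] at hshift
  show w.im ^ 2 < _
  nlinarith

lemma four_mul_sq_mul_re_sq_add_sq_sub_im_sq_sq (z : ℂ) (δ : ℝ) :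
    4 * δ ^ 2 * ((z ^ 2).re + δ ^ 2) - (z ^ 2).im ^ 2 =
      4 * (z.re ^ 2 + δ ^ 2) * (δ ^ 2 - z.im ^ 2) := by
  simp only [sq, mul_re, mul_im]
  ring

lemma sq_mem_parabolicRegion_iff (hδ : 0 < δ) (z : ℂ) :
    z ^ 2 ∈ parabolicRegion δ ↔ |z.im| ≤ δ := by
  have hpos : 0 < 4 * (z.re ^ 2 + δ ^ 2) := by positivity
  rw [parabolicRegion, mem_ofPred_eq, ← sub_nonneg, four_mul_sq_mul_re_sq_add_sq_sub_im_sq_sq,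
    mul_nonneg_iff_of_pos_left hpos, sub_nonneg, sq_le_sq, abs_of_pos hδ]

lemma sq_mem_openParabolicRegion_iff (hδ : 0 < δ) (z : ℂ) :
    z ^ 2 ∈ openParabolicRegion δ ↔ |z.im| < δ := by
  have hpos : 0 < 4 * (z.re ^ 2 + δ ^ 2) := by positivity
  rw [openParabolicRegion, mem_ofPred_eq, ← sub_pos, four_mul_sq_mul_re_sq_add_sq_sub_im_sq_sq,
    mul_pos_iff_of_pos_left hpos, sub_pos, sq_lt_sq, abs_of_pos hδ]

lemma image_sq_setOf_abs_im_le (hδ : 0 < δ) :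
    (· ^ 2) '' {z : ℂ | |z.im| ≤ δ} = parabolicRegion δ := by
  refine subset_antisymm (image_subset_iff.mpr fun z hz => ?_) fun w hw => ?_
  · exact (sq_mem_parabolicRegion_iff hδ z).mpr hz
  · obtain ⟨z, rfl⟩ := IsAlgClosed.exists_pow_nat_eq w two_pos
    exact ⟨z, (sq_mem_parabolicRegion_iff hδ z).mp hw, rfl⟩

lemma exists_mem_openParabolicRegion_inter_slitPlane (hδ : δ ≠ 0) {t : ℝ} (ht : -δ ^ 2 < t) :
    ∃ y : ℝ, (⟨t, y⟩ : ℂ) ∈ openParabolicRegion δ ∩ slitPlane := by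
  have hs : 0 < t + δ ^ 2 := by linarith
  refine ⟨δ * √(t + δ ^ 2), ?_, Or.inr ?_⟩
  · simp only [openParabolicRegion, mem_ofPred_eq, mul_pow, Real.sq_sqrt hs.le]
    nlinarith [mul_pos (sq_pos_of_ne_zero hδ) hs]
  · exact mul_ne_zero hδ (Real.sqrt_pos.mpr hs).ne'

lemma interior_image_add_parabolicRegion_diff (hδ : δ ≠ 0) (k : ℝ) :
    interior ((· + (k : ℂ)) '' parabolicRegion δ) \ {x : ℂ | x.im = 0 ∧ x.re ≤ k} =
      (· + (k : ℂ)) '' (openParabolicRegion δ ∩ slitPlane) := by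
  have hslit : {x : ℂ | x.im = 0 ∧ x.re ≤ k} = (· + (k : ℂ)) '' slitPlaneᶜ := by
    ext x
    simp only [image_add_right, mem_preimage, mem_compl_iff, mem_slitPlane_iff, add_re, add_im,
      neg_re, neg_im, ofReal_re, ofReal_im, neg_zero, add_zero, not_or, not_lt, not_not,
      mem_ofPred_eq]
    exact ⟨fun ⟨h1, h2⟩ => ⟨by linarith, h1⟩, fun ⟨h1, h2⟩ => ⟨h2, by linarith⟩⟩
  have hinterior := (Homeomorph.addRight (k : ℂ)).image_interior (parabolicRegion δ)
  rw [Homeomorph.coe_addRight] at hinterior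
  rw [← hinterior, interior_parabolicRegion hδ, hslit, ← image_sdiff (add_left_injective _),
    Set.sdiff_compl]

end ParabolicRegion

section HalfPlane

lemma sq_mem_slitPlane_of_re_pos {z : ℂ} (hz : 0 < z.re) : z ^ 2 ∈ slitPlane := by
  rw [mem_slitPlane_iff, sq, mul_re, mul_im]
  rcases eq_or_ne z.im 0 with him | him
  · left
    simp [him, hz]
  · exact Or.inr fun h => mul_ne_zero hz.ne' him (by linarith)

lemma exists_re_pos_sq_eq_of_mem_slitPlane {w : ℂ} (hw : w ∈ slitPlane) :
    ∃ z : ℂ, 0 < z.re ∧ z ^ 2 = w := by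
  obtain ⟨z, rfl⟩ := IsAlgClosed.exists_pow_nat_eq w two_pos
  rcases lt_trichotomy z.re 0 with h | h | h
  · exact ⟨-z, by simpa using h, neg_sq z⟩
  · simp only [sq, mem_slitPlane_iff, mul_re, h, mul_zero, zero_sub, Left.neg_pos_iff, mul_im,
      zero_mul, add_zero, ne_eq, not_true_eq_false, or_false] at hw
    exact absurd hw (mul_self_nonneg _).not_gt
  · exact ⟨z, h, rfl⟩

lemma injOn_sq_setOf_re_pos : InjOn (· ^ 2 : ℂ → ℂ) {z | 0 < z.re} := by
  intro u (hu : 0 < u.re) v (hv : 0 < v.re) huv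
  refine (sq_eq_sq_iff_eq_or_eq_neg.mp huv).resolve_right fun h => ?_
  have : u.re = -v.re := by rw [h, neg_re]
  linarith

variable {δ : ℝ}

lemma image_sq_setOf_re_pos_abs_im_lt (hδ : 0 < δ) :
    (· ^ 2) '' {z : ℂ | 0 < z.re ∧ |z.im| < δ} = openParabolicRegion δ ∩ slitPlane := by
  refine subset_antisymm (image_subset_iff.mpr fun z hz => ?_) fun w hw => ?_
  · exact ⟨(sq_mem_openParabolicRegion_iff hδ z).mpr hz.2, sq_mem_slitPlane_of_re_pos hz.1⟩
  · obtain ⟨z, hre, rfl⟩ := exists_re_pos_sq_eq_of_mem_slitPlane hw.2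
    exact ⟨z, ⟨hre, (sq_mem_openParabolicRegion_iff hδ z).mp hw.1⟩, rfl⟩

lemma convex_setOf_re_pos_abs_im_lt (δ : ℝ) : Convex ℝ {z : ℂ | 0 < z.re ∧ |z.im| < δ} := by
  simpa only [abs_lt, ofPred_and] using
    (convex_halfSpace_re_gt 0).inter
      ((convex_halfSpace_im_gt (-δ)).inter (convex_halfSpace_im_lt δ))

end HalfPlane

lemma sq_sub_sq_mul_one_sub_two_div {p : ℝ} (hp : p ≠ 0) (r : ℝ) :
    r ^ 2 - (r * (1 - 2 / p)) ^ 2 = 4 * r ^ 2 / p * (1 - 1 / p) := by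
  field_simp
  ring

/-- The change of variables for the rank-one case: with `δ = r(1 - 2/p)`, the map
`g(w) = w² + r² - c` is an injective holomorphic map from the strip
`S = {Re w > 0, |Im w| < δ}` onto `Ω = interior (P - c) \ {x ∈ ℝ : x ≤ r² - c}`; in
particular `Ω` is open and connected, and if `c > c_p = (4r²/p)(1 - 1/p)` then `Ω` meets
the imaginary axis. -/
theorem rank_one_change_of_variables
    (p r c : ℝ) (hp : 2 < p) (hr : 0 < r)
    (δ : ℝ) (hδ : δ = r * (1 - 2 / p))
    (P : Set ℂ) (hP : P = {w : ℂ | ∃ z : ℂ, |z.im| ≤ δ ∧ w = (r : ℂ) ^ 2 + z ^ 2})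
    (S : Set ℂ) (hS : S = {w : ℂ | 0 < w.re ∧ |w.im| < δ})
    (Ω : Set ℂ)
    (hΩ : Ω = interior ((fun w => w - (c : ℂ)) '' P) \
        {x : ℂ | x.im = 0 ∧ x.re ≤ r ^ 2 - c})
    (g : ℂ → ℂ) (hg : g = fun w => w ^ 2 + (r : ℂ) ^ 2 - (c : ℂ)) :
    Set.InjOn g S ∧ DifferentiableOn ℂ g S ∧ g '' S = Ω ∧
      IsOpen Ω ∧ IsConnected Ω ∧
      (4 * r ^ 2 / p * (1 - 1 / p) < c →
        ∃ y : ℝ, Complex.I * (y : ℂ) ∈ Ω) := by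
  have hδ0 : 0 < δ := hδ ▸ mul_pos hr (by rw [sub_pos, div_lt_one (by linarith)]; exact hp)
  have hg' : g = (· + ((r ^ 2 - c : ℝ) : ℂ)) ∘ (· ^ 2) := by
    rw [hg]; funext w; simp only [Function.comp_apply]; push_cast; ring
  have hP' : (fun w => w - (c : ℂ)) '' P = (· + ((r ^ 2 - c : ℝ) : ℂ)) '' parabolicRegion δ := by
    rw [← image_sq_setOf_abs_im_le hδ0, image_image, hP]
    ext w
    simp only [mem_image, mem_ofPred_eq]
    constructor
    · rintro ⟨_, ⟨z, hz, rfl⟩, rfl⟩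
      exact ⟨z, hz, by push_cast; ring⟩
    · rintro ⟨z, hz, rfl⟩
      exact ⟨_, ⟨z, hz, rfl⟩, by push_cast; ring⟩
  have hΩ' : Ω = (· + ((r ^ 2 - c : ℝ) : ℂ)) '' (openParabolicRegion δ ∩ slitPlane) := by
    rw [hΩ, hP', interior_image_add_parabolicRegion_diff hδ0.ne']
  have himage : g '' S = Ω := by
    rw [hg', image_comp, hS, image_sq_setOf_re_pos_abs_im_lt hδ0, hΩ']
  refine ⟨?_, by rw [hg]; fun_prop, himage, ?_, ?_, fun hc => ?_⟩
  · rw [hg', hS]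
    exact (add_left_injective _).comp_injOn (injOn_sq_setOf_re_pos.mono fun z hz => hz.1)
  · rw [hΩ']
    exact isOpenMap_add_right _ _ ((isOpen_openParabolicRegion δ).inter isOpen_slitPlane)
  · rw [← himage, hS]
    exact ((convex_setOf_re_pos_abs_im_lt δ).isConnected ⟨1, by simp [hδ0]⟩).image g
      (hg ▸ by fun_prop : Continuous g).continuousOn
  · have hvertex : -δ ^ 2 < c - r ^ 2 := by
      linarith [hδ ▸ sq_sub_sq_mul_one_sub_two_div (by linarith : p ≠ 0) r]
    obtain ⟨y, hy⟩ := exists_mem_openParabolicRegion_inter_slitPlane hδ0.ne' hvertex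
    refine ⟨y, hΩ' ▸ ⟨_, hy, ?_⟩⟩
    apply Complex.ext <;> simp [-ofReal_pow]
end

section
/- Let B be a complex Banach space, (T t)_{t≥0} a C₀-semigroup on B, Ω ⊆ ℂ an open connected set, and F : Ω → B a map such that T t (F λ) = exp(t·λ) • F λ for all λ ∈ Ω and t ≥ 0, such that for every continuous linear functional φ on B the map λ ↦ φ(F λ) is holomorphic on Ω, and such that the only continuous linear functional vanishing on all F λ, λ ∈ Ω, is zero. If the set U₀ := {λ ∈ Ω : Re λ < 0} has an accumulation point belonging to Ω, then the set B₀ := {f ∈ B : T t f → 0 as t → ∞} is dense in B. -/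
/-!
The eigenvectors `F λ` with `Re λ < 0` decay under the semigroup, hence so does their span.
That span is dense: a continuous functional vanishing on it makes the holomorphic function
`λ ↦ φ (F λ)` vanish on `{λ ∈ Ω | Re λ < 0}`, which accumulates at a point of `Ω`, so by the
identity theorem it vanishes on all of `Ω`, and totality of `F` forces `φ = 0`.
-/

open Filter Topology

theorem Submodule.exists_dual_eq_zero_ne_zero_of_notMem_topologicalClosure
    {𝕜 E : Type*} [RCLike 𝕜] [NormedAddCommGroup E] [NormedSpace 𝕜 E]
    (S : Submodule 𝕜 E) {x : E} (hx : x ∉ S.topologicalClosure) :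
    ∃ φ : StrongDual 𝕜 E, (∀ y ∈ S, φ y = 0) ∧ φ x ≠ 0 := by
  have : IsClosed (S.topologicalClosure : Set E) := S.isClosed_topologicalClosure
  obtain ⟨g, hg⟩ := SeparatingDual.exists_ne_zero (R := 𝕜)
    (x := S.topologicalClosure.mkQL x) (by simpa using hx)
  refine ⟨g.comp S.topologicalClosure.mkQL, fun y hy => ?_, hg⟩
  simp [(Submodule.Quotient.mk_eq_zero _).2 (S.le_topologicalClosure hy)]

theorem Submodule.dense_of_forall_dual_eq_zero
    {𝕜 E : Type*} [RCLike 𝕜] [NormedAddCommGroup E] [NormedSpace 𝕜 E] (S : Submodule 𝕜 E)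
    (h : ∀ φ : StrongDual 𝕜 E, (∀ y ∈ S, φ y = 0) → φ = 0) : Dense (S : Set E) := by
  refine Submodule.dense_iff_topologicalClosure_eq_top.2 (eq_top_iff.2 fun x _ => ?_)
  by_contra hx
  obtain ⟨φ, hφS, hφx⟩ := S.exists_dual_eq_zero_ne_zero_of_notMem_topologicalClosure hx
  exact hφx (by simp [h φ hφS])

theorem dense_span_image_of_accPt
    {B : Type*} [NormedAddCommGroup B] [NormedSpace ℂ B]
    {Ω U : Set ℂ} (hΩopen : IsOpen Ω) (hΩconn : IsPreconnected Ω) {F : ℂ → B}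
    (hHol : ∀ φ : StrongDual ℂ B, DifferentiableOn ℂ (fun z => φ (F z)) Ω)
    (hTotal : ∀ φ : StrongDual ℂ B, (∀ z ∈ Ω, φ (F z) = 0) → φ = 0)
    {z₀ : ℂ} (hz₀ : z₀ ∈ Ω) (hacc : AccPt z₀ (𝓟 U)) :
    Dense (Submodule.span ℂ (F '' U) : Set B) := by
  refine Submodule.dense_of_forall_dual_eq_zero _ fun φ hφ => hTotal φ fun z hz => ?_
  have hφU : ∀ z ∈ U, φ (F z) = 0 := fun z hz =>
    hφ _ (Submodule.subset_span (Set.mem_image_of_mem F hz))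
  have hfreq : ∃ᶠ z in 𝓝[≠] z₀, φ (F z) = 0 :=
    (accPt_iff_frequently_nhdsNE.1 hacc).mono fun z hz => hφU z hz
  exact ((hHol φ).analyticOnNhd hΩopen).eqOn_zero_of_preconnected_of_frequently_eq_zero
    hΩconn hz₀ hfreq hz

def tendstoZeroSubmodule {ι R E : Type*} [Semiring R] [TopologicalSpace E] [AddCommMonoid E]
    [Module R E] [ContinuousAdd E] [ContinuousConstSMul R E]
    (T : ι → E →L[R] E) (l : Filter ι) : Submodule R E where
  carrier := {f | Tendsto (fun t => T t f) l (𝓝 0)}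
  zero_mem' := by simpa using tendsto_const_nhds
  add_mem' {f g} hf hg := by simpa using hf.add hg
  smul_mem' c f hf := by simpa using hf.const_smul c

theorem tendsto_cexp_mul_smul_atTop_nhds_zero
    {E : Type*} [NormedAddCommGroup E] [NormedSpace ℂ E] {z : ℂ} (hz : z.re < 0) (v : E) :
    Tendsto (fun t : ℝ => Complex.exp (t * z) • v) atTop (𝓝 0) := by
  have hre : Tendsto (fun t : ℝ => ((t : ℂ) * z).re) atTop atBot := by
    simpa using tendsto_id.atTop_mul_const_of_neg hz
  simpa using (Complex.tendsto_exp_nhds_zero_iff.2 hre).smul_const v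

theorem dense_B0_of_eigenvector_field_general
    {B : Type*} [NormedAddCommGroup B] [NormedSpace ℂ B]
    (T : ℝ → B →L[ℂ] B)
    (Ω : Set ℂ) (hΩopen : IsOpen Ω) (hΩconn : IsConnected Ω)
    (F : ℂ → B)
    (hEig : ∀ z ∈ Ω, ∀ t : ℝ, 0 ≤ t → T t (F z) = Complex.exp ((t : ℂ) * z) • F z)
    (hHol : ∀ φ : B →L[ℂ] ℂ, DifferentiableOn ℂ (fun z => φ (F z)) Ω)
    (hTotal : ∀ φ : B →L[ℂ] ℂ, (∀ z ∈ Ω, φ (F z) = 0) → φ = 0)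
    (z₀ : ℂ) (hz₀ : z₀ ∈ Ω)
    (hacc : AccPt z₀ (Filter.principal {z ∈ Ω | z.re < 0})) :
    Dense {f : B | Filter.Tendsto (fun t => T t f) Filter.atTop (nhds 0)} := by
  have hspan_le : Submodule.span ℂ (F '' {z ∈ Ω | z.re < 0}) ≤ tendstoZeroSubmodule T atTop := by
    rw [Submodule.span_le]
    rintro - ⟨z, ⟨hzΩ, hzre⟩, rfl⟩
    refine (tendsto_cexp_mul_smul_atTop_nhds_zero hzre (F z)).congr' ?_
    filter_upwards [eventually_ge_atTop 0] with t ht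
    exact (hEig z hzΩ t ht).symm
  exact (dense_span_image_of_accPt hΩopen hΩconn.isPreconnected hHol hTotal hz₀ hacc).mono
    hspan_le

/-- Density of `B₀` in the Desch–Schappacher–Webb argument: given a weakly holomorphic,
total eigenvector field `F : Ω → B` of a C₀-semigroup, if the set
`U₀ = {λ ∈ Ω : Re λ < 0}` has an accumulation point inside `Ω`, then the set
`B₀ = {f : T t f → 0 as t → ∞}` is dense in `B`. -/
theorem dense_B0_of_eigenvector_field
    {B : Type*} [NormedAddCommGroup B] [NormedSpace ℂ B] [CompleteSpace B]
    (T : ℝ → B →L[ℂ] B)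
    (hT0 : T 0 = 1)
    (hTadd : ∀ s t : ℝ, 0 ≤ s → 0 ≤ t → T (s + t) = (T s).comp (T t))
    (hTcont : ∀ g : B, ContinuousOn (fun t => T t g) (Set.Ici (0 : ℝ)))
    (Ω : Set ℂ) (hΩopen : IsOpen Ω) (hΩconn : IsConnected Ω)
    (F : ℂ → B)
    (hEig : ∀ z ∈ Ω, ∀ t : ℝ, 0 ≤ t → T t (F z) = Complex.exp ((t : ℂ) * z) • F z)
    (hHol : ∀ φ : B →L[ℂ] ℂ, DifferentiableOn ℂ (fun z => φ (F z)) Ω)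
    (hTotal : ∀ φ : B →L[ℂ] ℂ, (∀ z ∈ Ω, φ (F z) = 0) → φ = 0)
    (z₀ : ℂ) (hz₀ : z₀ ∈ Ω)
    (hacc : AccPt z₀ (Filter.principal {z ∈ Ω | z.re < 0})) :
    Dense {f : B | Filter.Tendsto (fun t => T t f) Filter.atTop (nhds 0)} :=
  dense_B0_of_eigenvector_field_general T Ω hΩopen hΩconn F hEig hHol hTotal z₀ hz₀ hacc
end
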